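/- In the on-chain-verified audit game, if (i) S_a > ((1 − p_a)/p_a)·R_a + c_a/(ε·p_a), (ii) R_a > c_a/(1 − ε), and (iii) R_s > c_s, then the honest profile σ^h is a strict pure Nash equilibrium: for every SP i and every strategy σ_i ≠ σ^h_i, u_i(σ_i, σ^h_{−i}) < u_i(σ^h). -/
import Mathlib


/-!
On-chain-verified audit game: `N ≥ 3` storage providers (SPs), parameters
`R_s > 0` (storage reward), `R_a > 0` (per-audit reward), `c_s > 0` (storage cost),
`c_a > 0` (audit cost), `S_a ≥ 0` (slashing penalty), `p_a ∈ (0,1]` (inspection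
probability), `ε ∈ (0,1)` (noise). A pure strategy of SP `i` is a triple `(s, a, ρ)`:
a storage bit, audit bits for each other SP, and reporting policies `ρ j : Bool → Bool`
(report as a function of having received a valid proof).
-/

open Finset

/-- A pure strategy of storage provider `i` in the on-chain-verified audit game. -/
structure Strat (N : ℕ) (i : Fin N) where
  /-- whether `i` stores its assigned data -/
  s : Bool
  /-- whether `i` audits SP `j` (at cost `c_a`) -/
  a : {j : Fin N // j ≠ i} → Bool
  /-- `i`'s reporting policy about `j`, as a function of whether a valid proof was received -/
  ρ : {j : Fin N // j ≠ i} → Bool → Bool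

/-- Numerical value of a Boolean choice. -/
def b01 (b : Bool) : ℝ := if b then 1 else 0

/-- Expected audit payoff of the auditor from one ordered pair `(i,j)`, where `sj` is the
auditee's storage bit, `a` the auditor's audit bit, and `ρ` the auditor's reporting policy.
The backing probability is `β = 1 − ε` if the auditee stores and `0` otherwise; an unbacked
✓ report earns `(1 − p_a)·R_a − p_a·S_a` in expectation. -/
noncomputable def pairPayoff (Ra ca Sa pa ε : ℝ) (sj a : Bool) (ρ : Bool → Bool) : ℝ :=
  let β : ℝ := if sj then 1 - ε else 0
  let F : ℝ := (1 - pa) * Ra - pa * Sa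
  if a then β * b01 (ρ true) * Ra + (1 - β) * b01 (ρ false) * F - ca
  else b01 (ρ false) * (β * Ra + (1 - β) * F)

/-- The deterministic report of `i` about `j`: `r_i^j = ρ_i^j (a_i^j · s_j)`. -/
def report {N : ℕ} (σ : ∀ i : Fin N, Strat N i) (i : Fin N) (j : {j : Fin N // j ≠ i}) : Bool :=
  (σ i).ρ j ((σ i).a j && (σ j.1).s)

/-- Number of SPs `j ≠ i` whose deterministic report about `i` is ✓. -/
def trueReports {N : ℕ} (σ : ∀ i : Fin N, Strat N i) (i : Fin N) : ℕ :=
  (univ.filter fun j : {j : Fin N // j ≠ i} => report σ j.1 ⟨i, Ne.symm j.2⟩ = true).card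

/-- Total (expected) utility of SP `i`:
`u_i(σ) = R_s·1[|{j ≠ i : r_j^i = 1}| > N/2] − c_s·s_i + Σ_{j≠i} pairPayoff(i,j)`. -/
noncomputable def U {N : ℕ} (Rs Ra cs ca Sa pa ε : ℝ) (σ : ∀ i : Fin N, Strat N i)
    (i : Fin N) : ℝ :=
  Rs * (if (N : ℝ) / 2 < (trueReports σ i : ℝ) then 1 else 0)
    - cs * b01 (σ i).s
    + ∑ j : {j : Fin N // j ≠ i}, pairPayoff Ra ca Sa pa ε (σ j.1).s ((σ i).a j) ((σ i).ρ j)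

/-- Pure Nash equilibrium: no SP can strictly increase its own utility by unilaterally
changing its strategy. -/
def IsNashEq {N : ℕ} (Rs Ra cs ca Sa pa ε : ℝ) (σ : ∀ i : Fin N, Strat N i) : Prop :=
  ∀ (i : Fin N) (τ : Strat N i),
    U Rs Ra cs ca Sa pa ε (Function.update σ i τ) i ≤ U Rs Ra cs ca Sa pa ε σ i

/-- The honest strategy profile: store, audit everyone, report ✓ iff a valid proof
was received. -/
def honest (N : ℕ) : ∀ i : Fin N, Strat N i :=
  fun _ => ⟨true, fun _ => true, fun _ b => b⟩

/-- The fully dishonest strategy profile: don't store, don't audit, always report ✓. -/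
def dishonest (N : ℕ) : ∀ i : Fin N, Strat N i :=
  fun _ => ⟨false, fun _ => false, fun _ _ => true⟩

lemma pair_le_honest (Ra ca Sa pa ε : ℝ) (hRa : 0 < Ra) (hca : 0 < ca)
    (hε0 : 0 < ε) (hε1 : ε < 1)
    (hF : ε * ((1 - pa) * Ra - pa * Sa) < -ca) (h2 : ca < (1 - ε) * Ra)
    (a : Bool) (ρ : Bool → Bool) :
    pairPayoff Ra ca Sa pa ε true a ρ ≤ (1 - ε) * Ra - ca ∧
    ((a = true ∧ ρ = fun b => b) ∨
      pairPayoff Ra ca Sa pa ε true a ρ < (1 - ε) * Ra - ca) := by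
  have hρ : ρ true = true → ρ false = false → ρ = fun b => b := by
    intro h1 h2; funext b; cases b <;> assumption
  by_cases hh : a = true ∧ ρ true = true ∧ ρ false = false
  · obtain ⟨ha, ht, hf⟩ := hh
    subst ha
    refine ⟨le_of_eq ?_, Or.inl ⟨rfl, hρ ht hf⟩⟩
    simp [pairPayoff, b01, ht, hf]; try ring
  · have hlt : pairPayoff Ra ca Sa pa ε true a ρ < (1 - ε) * Ra - ca := by
      cases a <;> rcases ht : ρ true with _ | _ <;> rcases hf : ρ false with _ | _ <;>
        simp only [pairPayoff, b01, ht, hf, if_true, if_false, Bool.false_eq_true,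
          ite_true, ite_false] <;>
        first
          | nlinarith
          | (exact absurd ⟨rfl, ht, hf⟩ hh)
    exact ⟨le_of_lt hlt, Or.inr hlt⟩

lemma strat_eq_honest {N : ℕ} {i : Fin N} (τ : Strat N i) (hs : τ.s = true)
    (h : ∀ j, τ.a j = true ∧ τ.ρ j = fun b => b) : τ = honest N i := by
  obtain ⟨s, a, ρ⟩ := τ
  have ha : a = fun _ => true := funext fun j => (h j).1
  have hρ2 : ρ = fun _ b => b := funext fun j => (h j).2
  rw [show Strat.mk s a ρ = Strat.mk true (fun _ => true) (fun _ b => b) by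
    rw [show s = true from hs, ha, hρ2]]
  rfl

/-- In the on-chain-verified audit game, if
(i) `S_a > ((1 − p_a)/p_a)·R_a + c_a/(ε·p_a)`, (ii) `R_a > c_a/(1 − ε)`, and
(iii) `R_s > c_s`, then the honest profile is a *strict* pure Nash equilibrium: every
unilateral deviation to a different strategy yields strictly lower utility. -/
theorem onchain_honest_strict_nash
    (N : ℕ) (hN : 3 ≤ N) (Rs Ra cs ca Sa pa ε : ℝ)
    (hRs : 0 < Rs) (hRa : 0 < Ra) (hcs : 0 < cs) (hca : 0 < ca) (hSa : 0 ≤ Sa)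
    (hpa0 : 0 < pa) (hpa1 : pa ≤ 1) (hε0 : 0 < ε) (hε1 : ε < 1)
    (h1 : ((1 - pa) / pa) * Ra + ca / (ε * pa) < Sa)
    (h2 : ca / (1 - ε) < Ra)
    (h3 : cs < Rs) :
    ∀ (i : Fin N) (τ : Strat N i), τ ≠ honest N i →
      U Rs Ra cs ca Sa pa ε (Function.update (honest N) i τ) i
        < U Rs Ra cs ca Sa pa ε (honest N) i := by
  -- derived numeric facts
  have hpaε : 0 < ε * pa := mul_pos hε0 hpa0
  have hF : ε * ((1 - pa) * Ra - pa * Sa) < -ca := by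
    have h := mul_lt_mul_of_pos_right h1 hpaε
    rw [add_mul] at h
    have e1 : (1 - pa) / pa * Ra * (ε * pa) = ε * ((1 - pa) * Ra) := by
      field_simp
    have e2 : ca / (ε * pa) * (ε * pa) = ca := div_mul_cancel₀ ca (ne_of_gt hpaε)
    rw [e1, e2] at h
    nlinarith [h]
  have h2' : ca < (1 - ε) * Ra := by
    have h1ε : 0 < 1 - ε := by linarith
    calc ca = (ca / (1 - ε)) * (1 - ε) := by field_simp
    _ < Ra * (1 - ε) := mul_lt_mul_of_pos_right h2 h1ε
    _ = (1 - ε) * Ra := by ring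
  set H : ℝ := (1 - ε) * Ra - ca with hH
  intro i τ hτ
  set σ' := Function.update (honest N) i τ with hσ'
  have hσ'i : σ' i = τ := Function.update_self i τ (honest N)
  have hσ'j : ∀ (j : {j : Fin N // j ≠ i}), σ' j.1 = honest N j.1 := fun j =>
    Function.update_of_ne j.2 τ (honest N)
  -- cardinality
  have hcard : Fintype.card {j : Fin N // j ≠ i} = N - 1 := by
    simp [Fintype.card_subtype_compl]
  have hN1 : (1 : ℕ) ≤ N := by omega
  have hNR : (3 : ℝ) ≤ (N : ℝ) := by exact_mod_cast hN
  have hcardR : ((N - 1 : ℕ) : ℝ) = (N : ℝ) - 1 := by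
    push_cast [Nat.cast_sub hN1]; ring
  have hsumH : (∑ _j : {j : Fin N // j ≠ i}, H) = ((N : ℝ) - 1) * H := by
    rw [Finset.sum_const, nsmul_eq_mul]; simp [hcard, hcardR]
  -- reports under honest profile
  have hrepH : trueReports (honest N) i = N - 1 := by
    unfold trueReports
    have h : ∀ j : {j : Fin N // j ≠ i}, report (honest N) j.1 ⟨i, Ne.symm j.2⟩ = true := by
      intro j; simp [report, honest]
    simp only [h]
    simp [Finset.filter_true_of_mem, hcard]
  -- reports under deviated profile
  have hrepD : trueReports σ' i = if τ.s then N - 1 else 0 := by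
    unfold trueReports
    have h : ∀ j : {j : Fin N // j ≠ i},
        report σ' j.1 ⟨i, Ne.symm j.2⟩ = τ.s := by
      intro j
      unfold report
      rw [hσ'j j, hσ'i]
      simp [honest]
    simp only [h]
    cases hs : τ.s <;> simp [Finset.filter_true_of_mem, hcard]
  have hindpos : (N : ℝ) / 2 < ((N - 1 : ℕ) : ℝ) := by rw [hcardR]; linarith
  -- honest utility
  have hUh : U Rs Ra cs ca Sa pa ε (honest N) i = Rs - cs + ((N : ℝ) - 1) * H := by
    unfold U
    rw [hrepH, if_pos hindpos]
    have hsum : ∑ j : {j : Fin N // j ≠ i},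
        pairPayoff Ra ca Sa pa ε ((honest N) j.1).s ((honest N i).a j) ((honest N i).ρ j)
        = ((N : ℝ) - 1) * H := by
      have h : ∀ j : {j : Fin N // j ≠ i},
          pairPayoff Ra ca Sa pa ε ((honest N) j.1).s ((honest N i).a j) ((honest N i).ρ j)
          = H := by
        intro j; simp [honest, pairPayoff, b01, hH]; try ring
      rw [Finset.sum_congr rfl (fun j _ => h j), hsumH]
    rw [hsum]
    simp [honest, b01]
    try ring
  -- indicator under deviation
  have hind : (if (N : ℝ) / 2 < ((if τ.s then N - 1 else 0 : ℕ) : ℝ) then (1:ℝ) else 0)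
      = if τ.s then 1 else 0 := by
    cases τ.s
    · simp only [if_false, Bool.false_eq_true, ite_false]
      rw [if_neg]
      push_cast
      intro h; linarith
    · simp only [ite_true, if_pos hindpos]
  -- deviated utility form
  have hUd : U Rs Ra cs ca Sa pa ε σ' i
      = Rs * (if τ.s then 1 else 0) - cs * b01 τ.s
        + ∑ j : {j : Fin N // j ≠ i},
            pairPayoff Ra ca Sa pa ε ((σ' j.1)).s ((τ.a) j) ((τ.ρ) j) := by
    unfold U
    rw [hσ'i, hrepD, hind]
  -- per-pair bounds
  have hpair := fun (j : {j : Fin N // j ≠ i}) =>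
    pair_le_honest Ra ca Sa pa ε hRa hca hε0 hε1 hF h2' (τ.a j) (τ.ρ j)
  have heq : ∀ j : {j : Fin N // j ≠ i},
      pairPayoff Ra ca Sa pa ε ((σ' j.1)).s (τ.a j) (τ.ρ j)
      = pairPayoff Ra ca Sa pa ε true (τ.a j) (τ.ρ j) := by
    intro j; rw [hσ'j j]; rfl
  have hsum_le : ∑ j : {j : Fin N // j ≠ i},
      pairPayoff Ra ca Sa pa ε ((σ' j.1)).s (τ.a j) (τ.ρ j) ≤ ((N : ℝ) - 1) * H := by
    rw [Finset.sum_congr rfl fun j _ => heq j, ← hsumH]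
    exact Finset.sum_le_sum fun j _ => (hpair j).1
  rw [hUh, hUd]
  cases hs : τ.s
  · -- did not store: loses Rs - cs
    simp only [Bool.false_eq_true, ite_false, b01, mul_zero, mul_one]
    linarith [hsum_le]
  · -- stored: some pair deviates
    simp only [ite_true, b01, mul_one]
    have hex : ∃ j : {j : Fin N // j ≠ i}, ¬(τ.a j = true ∧ τ.ρ j = fun b => b) := by
      by_contra hc
      push_neg at hc
      exact hτ (strat_eq_honest τ hs hc)
    obtain ⟨j0, hj0⟩ := hex
    have hstrict : pairPayoff Ra ca Sa pa ε true (τ.a j0) (τ.ρ j0) < H := by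
      rcases (hpair j0).2 with h | h
      · exact absurd h hj0
      · exact h
    have hsum_lt : ∑ j : {j : Fin N // j ≠ i},
        pairPayoff Ra ca Sa pa ε ((σ' j.1)).s (τ.a j) (τ.ρ j) < ((N : ℝ) - 1) * H := by
      rw [Finset.sum_congr rfl fun j _ => heq j, ← hsumH]
      exact Finset.sum_lt_sum (fun j _ => (hpair j).1) ⟨j0, Finset.mem_univ j0, hstrict⟩
    linarith
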